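/- Let n ≥ 3 and 0 ≤ k ≤ n−3. Let f ∈ MvPolynomial (Fin n × Fin n) ℂ be homogeneous of degree d with d < (n−k)(n−k−1)/2 (i.e. d < binom(n−k, 2)). If f(A) = 0 for every Hermitian matrix A ∈ Matrix (Fin n) (Fin n) ℂ whose powers A^0, A^1, …, A^{n−k−1} are linearly dependent over ℂ (equivalently, whose minimal polynomial has degree at most n−k−1, i.e. A has at most n−k−1 distinct eigenvalues), then f = 0. -/

import Mathlib

/-!
Diagonalise a Hermitian matrix as `H = U diag(λ) U*`. The polynomial `P(x) = f(U diag(x) U*)`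
is homogeneous of degree `d`, and it vanishes at every real `x` with fewer than `N = n - k`
distinct coordinates, since the powers of `U diag(x) U*` then satisfy `∏ (X - xᵢ)`, of degree
`< N`. Such a `P` is zero: by induction on `j`, so is every `rename c P` with `c` a map of
the variables into `Fin j`. For `j < N` this is the hypothesis at real points; for `j ≥ N`,
merging two of the `j` variables gives the previous case, so `rename c P` is divisible by the
Vandermonde product, whose degree `binom(j, 2)` exceeds `d`. Thus `f` vanishes on Hermitian
matrices, and, as `ℜM + z ℑM` is Hermitian for real `z` and equals `M` at `z = i`, everywhere.
-/

open MvPolynomial Finset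

theorem Function.update_id_apply_ne_of_lt {σ : Type*} [LinearOrder σ] {p q : σ × σ}
    (hp : p.1 < p.2) (hq : q.1 < q.2) (hpq : p ≠ q) :
    Function.update id q.1 q.2 p.1 ≠ Function.update id q.1 q.2 p.2 := by
  simp only [Function.update_apply, id]
  have := Prod.ext_iff.not.mp hpq
  split_ifs <;> grind

theorem Set.ncard_range_comp_le {α β : Type*} {j : ℕ} (y : Fin j → β) (c : α → Fin j) :
    (Set.range (y ∘ c)).ncard ≤ j :=
  calc (Set.range (y ∘ c)).ncard ≤ (Set.range y).ncard :=
        Set.ncard_le_ncard (Set.range_comp_subset_range c y) (Set.finite_range y)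
    _ ≤ j := by simpa [← Set.image_univ] using Set.ncard_image_le (f := y) Set.finite_univ

namespace MvPolynomial

section Vandermonde

variable {R σ : Type*} [CommRing R]

theorem X_sub_X_dvd_sub_rename_update [DecidableEq σ] (a b : σ) (q : MvPolynomial σ R) :
    X a - X b ∣ q - rename (Function.update id a b) q := by
  rw [← Ideal.mem_span_singleton, ← Ideal.Quotient.eq]
  have hmk : (Ideal.Quotient.mkₐ R (Ideal.span {X a - X b})).comp
      (rename (Function.update id a b)) = Ideal.Quotient.mkₐ R _ := by
    ext i
    by_cases hi : i = a
    · subst hi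
      simpa using (Ideal.Quotient.eq.mpr (Ideal.mem_span_singleton_self _)).symm
    · simp [Function.update_of_ne hi]
  exact (DFunLike.congr_fun hmk q).symm

theorem X_sub_X_ne_zero [Nontrivial R] {a b : σ} (h : a ≠ b) :
    (X a - X b : MvPolynomial σ R) ≠ 0 :=
  sub_ne_zero.mpr fun e => h (X_injective e)

variable [IsDomain R]

theorem IsHomogeneous.eq_zero_of_dvd {P Q : MvPolynomial σ R} {d e : ℕ}
    (hP : P.IsHomogeneous d) (hQ : Q.IsHomogeneous e) (hQ0 : Q ≠ 0) (hde : d < e)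
    (h : Q ∣ P) : P = 0 := by
  by_contra hP0
  obtain ⟨g, rfl⟩ := h
  have hdeg := totalDegree_mul_of_isDomain hQ0 (right_ne_zero_of_mul hP0)
  rw [hP.totalDegree hP0, hQ.totalDegree hQ0] at hdeg
  omega

variable [LinearOrder σ]

theorem prod_X_sub_X_dvd (S : Finset (σ × σ)) (hS : ∀ p ∈ S, p.1 < p.2) (Q : MvPolynomial σ R)
    (hQ : ∀ p ∈ S, rename (Function.update id p.1 p.2) Q = 0) :
    ∏ p ∈ S, (X p.1 - X p.2) ∣ Q := by
  induction S using Finset.cons_induction generalizing Q with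
  | empty => simp
  | cons p S hpS ih =>
    obtain ⟨Q', rfl⟩ : X p.1 - X p.2 ∣ Q := by
      simpa [hQ p (mem_cons_self ..)] using X_sub_X_dvd_sub_rename_update p.1 p.2 Q
    rw [prod_cons]
    refine mul_dvd_mul_left _ (ih (fun q hq => hS q (mem_cons_of_mem hq)) Q' fun q hq => ?_)
    -- the merge for `q` does not kill the factor `X p.1 - X p.2`, so it kills `Q'`
    have hne := Function.update_id_apply_ne_of_lt (hS p (mem_cons_self ..))
      (hS q (mem_cons_of_mem hq)) (ne_of_mem_of_not_mem hq hpS).symm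
    simpa [X_sub_X_ne_zero hne] using hQ q (mem_cons_of_mem hq)

theorem eq_zero_of_rename_update_eq_zero [Fintype σ] {Q : MvPolynomial σ R} {d : ℕ}
    (hQ : Q.IsHomogeneous d) (hd : d < (Fintype.card σ).choose 2)
    (hvan : ∀ a b : σ, a < b → rename (Function.update id a b) Q = 0) : Q = 0 := by
  let S : Finset (σ × σ) := {p | p.1 < p.2}
  have hS : ∀ p ∈ S, p.1 < p.2 := fun p hp => (mem_filter.mp hp).2
  refine hQ.eq_zero_of_dvd (e := #S) ?_ ?_ (by rwa [Fintype.card_product_filter_lt])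
    (prod_X_sub_X_dvd S hS Q fun p hp => hvan _ _ (hS p hp))
  · simpa using IsHomogeneous.prod S _ (fun _ => 1)
      fun p _ => (isHomogeneous_X R p.1).sub (isHomogeneous_X R p.2)
  · exact prod_ne_zero_iff.mpr fun p hp => X_sub_X_ne_zero (hS p hp).ne

end Vandermonde

section FewValues

variable {R σ : Type*} [CommRing R]

theorem rename_eq_zero_of_notMem_range {P : MvPolynomial σ R} {j : ℕ}
    (h : ∀ c : σ → Fin j, rename c P = 0) {c : σ → Fin (j + 1)} {a : Fin (j + 1)}
    (ha : a ∉ Set.range c) : rename c P = 0 := by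
  choose c' hc' using fun i => Fin.exists_succAbove_eq fun hi : c i = a => ha ⟨i, hi⟩
  rw [show c = a.succAbove ∘ c' from _root_.funext fun i => (hc' i).symm, ← rename_rename, h,
    map_zero]

variable [IsDomain R] {s : Set R} {P : MvPolynomial σ R} {N : ℕ}

theorem rename_fin_eq_zero_of_lt (hs : s.Infinite)
    (hvan : ∀ x : σ → R, (∀ i, x i ∈ s) → (Set.range x).ncard < N → eval x P = 0)
    {j : ℕ} (hj : j < N) (c : σ → Fin j) : rename c P = 0 :=
  funext_set (fun _ => s) (fun _ => hs) fun y hy => by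
    rw [eval_rename, map_zero]
    exact hvan _ (fun i => hy (c i) trivial) ((Set.ncard_range_comp_le y c).trans_lt hj)

theorem eq_zero_of_eval_eq_zero_of_ncard_range_lt [Finite σ] (hs : s.Infinite) {d : ℕ}
    (hP : P.IsHomogeneous d) (hd : d < N.choose 2)
    (hvan : ∀ x : σ → R, (∀ i, x i ∈ s) → (Set.range x).ncard < N → eval x P = 0) :
    P = 0 := by
  suffices h : ∀ j (c : σ → Fin j), rename c P = 0 by
    obtain ⟨j, ⟨e⟩⟩ := Finite.exists_equiv_fin σ
    exact rename_injective _ e.injective (by simpa using h j e)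
  have hN : 0 < N := Nat.pos_of_ne_zero fun h => by simp [h] at hd
  intro j
  induction j with
  | zero => exact rename_fin_eq_zero_of_lt hs hvan hN
  | succ j ih =>
    by_cases hj : j + 1 < N
    · exact rename_fin_eq_zero_of_lt hs hvan hj
    intro c
    refine eq_zero_of_rename_update_eq_zero hP.rename_isHomogeneous
      (hd.trans_le (by simpa using Nat.choose_le_choose 2 (not_lt.mp hj))) fun a b hab => ?_
    rw [rename_rename]
    refine rename_eq_zero_of_notMem_range ih (a := a) ?_
    rintro ⟨i, hi⟩
    by_cases hia : c i = a <;> simp [hia, hab.ne'] at hi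

end FewValues

section RestrictSpan

variable {R σ τ : Type*} [CommRing R] [Fintype σ]

noncomputable def restrictSpan (v : σ → τ → R) (f : MvPolynomial τ R) : MvPolynomial σ R :=
  bind₁ (fun t => ∑ l, C (v l t) * X l) f

theorem eval_restrictSpan (v : σ → τ → R) (f : MvPolynomial τ R) (x : σ → R) :
    eval x (restrictSpan v f) = eval (∑ l, x l • v l) f := by
  rw [show eval x (restrictSpan v f) = eval (fun t => eval x (∑ l, C (v l t) * X l)) f from
    eval₂Hom_bind₁ (RingHom.id R) x _ f]
  congr 2 with t
  simp [mul_comm]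

theorem eval_restrictSpan_uncurry {ι : Type*} (B : σ → Matrix ι ι R)
    (f : MvPolynomial (ι × ι) R) (x : σ → R) :
    eval x (restrictSpan (fun l => Function.uncurry (B l)) f)
      = eval (fun p => (∑ l, x l • B l) p.1 p.2) f := by
  rw [eval_restrictSpan]
  congr 2 with p
  simp only [Finset.sum_apply, Pi.smul_apply, Matrix.sum_apply, Matrix.smul_apply]
  rfl

theorem IsHomogeneous.restrictSpan {f : MvPolynomial τ R} {d : ℕ} (hf : f.IsHomogeneous d)
    (v : σ → τ → R) : (restrictSpan v f).IsHomogeneous d := by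
  have h := hf.aeval (fun t => ∑ l, C (v l t) * X l) fun t =>
    IsHomogeneous.sum _ _ 1 fun l _ => (isHomogeneous_X R l).C_mul (v l t)
  rwa [one_mul] at h

end RestrictSpan

end MvPolynomial

theorem Polynomial.not_linearIndependent_pow_of_aeval_eq_zero {K A : Type*} [CommRing K]
    [Ring A] [Algebra K A] {x : A} {p : Polynomial K} (hp : p ≠ 0)
    (hx : Polynomial.aeval x p = 0) {N : ℕ} (hN : p.natDegree < N) :
    ¬ LinearIndependent K (fun r : Fin N => x ^ (r : ℕ)) := by
  intro hli
  refine hp (Polynomial.leadingCoeff_eq_zero.mp (Fintype.linearIndependent_iff.mp hli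
    (fun r => p.coeff r) ?_ ⟨_, hN⟩))
  rw [Fin.sum_univ_eq_sum_range (fun r => p.coeff r • x ^ r),
    ← Polynomial.aeval_eq_sum_range' hN, hx]

theorem Matrix.aeval_diagonal_eq_zero {K ι : Type*} [CommRing K] [Fintype ι] [DecidableEq ι]
    {x : ι → K} {p : Polynomial K} (hp : ∀ i, p.IsRoot (x i)) :
    Polynomial.aeval (diagonal x) p = 0 := by
  rw [← Matrix.diagonalAlgHom_apply (R := K), Polynomial.aeval_algHom_apply,
    Polynomial.aeval_pi_apply]
  simp [funext hp]

theorem RCLike.infinite_setOf_isSelfAdjoint (𝕜 : Type*) [RCLike 𝕜] :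
    {z : 𝕜 | IsSelfAdjoint z}.Infinite :=
  Set.infinite_of_injective_forall_mem RCLike.ofReal_injective fun r => RCLike.conj_ofReal r

open Matrix Polynomial in
theorem Matrix.IsHermitian.eval_eq_zero_of_forall_not_linearIndependent_pow {𝕜 ι : Type*}
    [RCLike 𝕜] [Fintype ι] [DecidableEq ι] {f : MvPolynomial (ι × ι) 𝕜} {d N : ℕ}
    (hf : f.IsHomogeneous d) (hd : d < N.choose 2)
    (hvan : ∀ A : Matrix ι ι 𝕜, A.IsHermitian →
      ¬ LinearIndependent 𝕜 (fun r : Fin N => A ^ (r : ℕ)) → eval (fun p => A p.1 p.2) f = 0)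
    {H : Matrix ι ι 𝕜} (hH : H.IsHermitian) : eval (fun p => H p.1 p.2) f = 0 := by
  classical
  let conj := Unitary.conjStarAlgAut 𝕜 (Matrix ι ι 𝕜) hH.eigenvectorUnitary
  have hconj (x : ι → 𝕜) : ∑ l, x l • conj (single l l 1) = conj (diagonal x) := by
    simp only [← map_smul, ← map_sum, smul_single, smul_eq_mul, mul_one, sum_single_eq_diagonal]
  have hzero : restrictSpan (fun l => Function.uncurry (conj (single l l 1))) f = 0 := by
    refine eq_zero_of_eval_eq_zero_of_ncard_range_lt (RCLike.infinite_setOf_isSelfAdjoint 𝕜)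
      (hf.restrictSpan _) hd fun x hx hN => ?_
    rw [eval_restrictSpan_uncurry, hconj]
    refine hvan _ (IsSelfAdjoint.map (isHermitian_diagonal_iff.mpr hx) conj) ?_
    refine not_linearIndependent_pow_of_aeval_eq_zero
      (monic_prod_X_sub_C id (Set.finite_range x).toFinset).ne_zero ?_ ?_
    · rw [aeval_algHom_apply, aeval_diagonal_eq_zero, map_zero]
      intro i
      simp [Polynomial.eval_prod, Finset.prod_eq_zero_iff, sub_eq_zero]
    · rwa [natDegree_finsetProd_X_sub_C_eq_card,
        ← Set.ncard_eq_toFinset_card _ (Set.finite_range x)]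
  have h := congrArg (MvPolynomial.eval (RCLike.ofReal ∘ hH.eigenvalues)) hzero
  rwa [eval_restrictSpan_uncurry, hconj, map_zero, ← hH.spectral_theorem] at h

open ComplexStarModule in
theorem MvPolynomial.eq_zero_of_forall_isHermitian {ι : Type*} [Fintype ι]
    {f : MvPolynomial (ι × ι) ℂ}
    (h : ∀ A : Matrix ι ι ℂ, A.IsHermitian → eval (fun p => A p.1 p.2) f = 0) : f = 0 := by
  refine MvPolynomial.funext fun M => ?_
  let A : Matrix ι ι ℂ := Matrix.of fun i j => M (i, j)
  let B : Fin 2 → Matrix ι ι ℂ := ![ℜ A, ℑ A]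
  have hzero : restrictSpan (fun l => Function.uncurry (B l)) f = 0 :=
    funext_set (fun _ => {z : ℂ | IsSelfAdjoint z})
      (fun _ => RCLike.infinite_setOf_isSelfAdjoint ℂ) fun x hx => by
        rw [eval_restrictSpan_uncurry, map_zero, Fin.sum_univ_two]
        exact h _ (((hx 0 trivial).smul (ℜ A).2).add ((hx 1 trivial).smul (ℑ A).2))
  have hM := congrArg (eval ![1, Complex.I]) hzero
  rw [eval_restrictSpan_uncurry, Fin.sum_univ_two] at hM
  simp only [B, Matrix.cons_val_zero, Matrix.cons_val_one, one_smul,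
    realPart_add_I_smul_imaginaryPart] at hM
  simpa [A] using hM

theorem stmt_13_general (n k : ℕ)
    (f : MvPolynomial (Fin n × Fin n) ℂ) (d : ℕ)
    (hf : f.IsHomogeneous d) (hd : d < Nat.choose (n - k) 2)
    (hvan : ∀ A : Matrix (Fin n) (Fin n) ℂ, A.IsHermitian →
      ¬ LinearIndependent ℂ (fun r : Fin (n - k) => A ^ (r : ℕ)) →
      MvPolynomial.eval (fun p => A p.1 p.2) f = 0) :
    f = 0 :=
  eq_zero_of_forall_isHermitian fun _ hA =>
    hA.eval_eq_zero_of_forall_not_linearIndependent_pow hf hd hvan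

/-- For `n ≥ 3` and `0 ≤ k ≤ n-3`, any homogeneous polynomial of degree
`d < binom(n-k, 2)` vanishing on all Hermitian `n×n` matrices with at most
`n-k-1` distinct eigenvalues is zero. -/
theorem stmt_13 (n k : ℕ) (hn : 3 ≤ n) (hk : k ≤ n - 3)
    (f : MvPolynomial (Fin n × Fin n) ℂ) (d : ℕ)
    (hf : f.IsHomogeneous d) (hd : d < Nat.choose (n - k) 2)
    (hvan : ∀ A : Matrix (Fin n) (Fin n) ℂ, A.IsHermitian →
      ¬ LinearIndependent ℂ (fun r : Fin (n - k) => A ^ (r : ℕ)) →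
      MvPolynomial.eval (fun p => A p.1 p.2) f = 0) :
    f = 0 :=
  stmt_13_general n k f d hf hd hvan
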